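/- Let H be a complex Hilbert space, C a conjugation on H, and N a bounded linear operator. Then N is C-normal if and only if ‖N*(Ch)‖ = ‖Nh‖ for all h ∈ H. -/

import Mathlib

open ContinuousLinearMap
open scoped ComplexConjugate

/-- A conjugation on a complex Hilbert space: an antilinear isometric involution. -/
structure IsConjugation {H : Type*} [NormedAddCommGroup H] [InnerProductSpace ℂ H]
    (C : H → H) : Prop where
  map_add : ∀ x y : H, C (x + y) = C x + C y
  map_smul : ∀ (a : ℂ) (x : H), C (a • x) = (conj a) • C x
  involutive : ∀ x : H, C (C x) = x
  inner_eq : ∀ x y : H, (inner ℂ (C x) (C y) : ℂ) = inner ℂ y x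

/-- `N` is `C`-normal: `C N N* = N* N C`. -/
def CNormal {H : Type*} [NormedAddCommGroup H] [InnerProductSpace ℂ H] [CompleteSpace H]
    (C : H → H) (N : H →L[ℂ] H) : Prop :=
  ∀ x : H, C (N (adjoint N x)) = adjoint N (N (C x))

/-! The identity `C N N* = N* N C` says that the linear operator `C (N N*) C` equals `N* N`.
A complex-linear operator is determined by its quadratic form, and the quadratic forms of
these two operators at `x` are `‖N* (C x)‖²` and `‖N x‖²`. -/

namespace IsConjugation

variable {H : Type*} [NormedAddCommGroup H] [InnerProductSpace ℂ H] {C : H → H}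

theorem inner_left_comm (hC : IsConjugation C) (x y : H) :
    (inner ℂ (C x) y : ℂ) = inner ℂ (C y) x := by
  rw [← hC.involutive y, hC.inner_eq, hC.involutive]

def conjugate (hC : IsConjugation C) (T : H →ₗ[ℂ] H) : H →ₗ[ℂ] H where
  toFun x := C (T (C x))
  map_add' x y := by rw [hC.map_add, T.map_add, hC.map_add]
  map_smul' a x := by
    rw [hC.map_smul, T.map_smul, hC.map_smul, Complex.conj_conj, RingHom.id_apply]

theorem conjugate_apply (hC : IsConjugation C) (T : H →ₗ[ℂ] H) (x : H) :
    hC.conjugate T x = C (T (C x)) := rfl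

theorem inner_conjugate_apply_self (hC : IsConjugation C) (T : H →ₗ[ℂ] H) (x : H) :
    (inner ℂ (hC.conjugate T x) x : ℂ) = inner ℂ (C x) (T (C x)) :=
  hC.inner_left_comm _ _

end IsConjugation

section CNormal

variable {H : Type*} [NormedAddCommGroup H] [InnerProductSpace ℂ H] [CompleteSpace H]
  {C : H → H}

theorem IsConjugation.cNormal_iff_conjugate_eq (hC : IsConjugation C) (N : H →L[ℂ] H) :
    CNormal C N ↔ hC.conjugate (N ∘L adjoint N : H →L[ℂ] H) = (adjoint N ∘L N : H →L[ℂ] H) := by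
  refine ⟨fun hN => LinearMap.ext fun x => ?_, fun h x => ?_⟩
  · simpa only [hC.conjugate_apply, ContinuousLinearMap.coe_coe, ContinuousLinearMap.comp_apply,
      hC.involutive] using hN (C x)
  · simpa only [hC.conjugate_apply, ContinuousLinearMap.coe_coe, ContinuousLinearMap.comp_apply,
      hC.involutive] using LinearMap.congr_fun h (C x)

end CNormal

theorem stmt4 {H : Type*} [NormedAddCommGroup H] [InnerProductSpace ℂ H] [CompleteSpace H]
    (C : H → H) (hC : IsConjugation C) (N : H →L[ℂ] H) :
    CNormal C N ↔ (∀ h : H, ‖adjoint N (C h)‖ = ‖N h‖) := by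
  rw [hC.cNormal_iff_conjugate_eq, ← ext_inner_map]
  refine forall_congr' fun x => ?_
  have hNN : (inner ℂ (C x) (N (adjoint N (C x))) : ℂ) = (‖adjoint N (C x)‖ : ℂ) ^ 2 := by
    rw [← adjoint_inner_left]; exact inner_self_eq_norm_sq_to_K _
  have hNstarN : (inner ℂ (adjoint N (N x)) x : ℂ) = (‖N x‖ : ℂ) ^ 2 := by
    rw [adjoint_inner_left]; exact inner_self_eq_norm_sq_to_K _
  simp only [hC.inner_conjugate_apply_self, ContinuousLinearMap.coe_coe,
    ContinuousLinearMap.comp_apply, hNN, hNstarN]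
  norm_cast
  exact pow_left_inj₀ (norm_nonneg _) (norm_nonneg _) two_ne_zero
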